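/- Linear independence constraint qualification for the master problem. Let N ∈ ℕ, δ̄ > 0, 0 ≤ m < 1 < M, let b ∈ ℝ^N have strictly positive entries, and let h : [m·δ̄, M·δ̄] → ℝ be differentiable with h'(σ) < 0 for every σ in the open interval (m·δ̄, M·δ̄). Let δ ∈ [m·δ̄, M·δ̄]^N and suppose there exists an index k₀ with m·δ̄ < δ_{k₀} < M·δ̄. Then the family of vectors in ℝ^N consisting of the vector g = (b_0 h'(δ_0), …, b_{N−1} h'(δ_{N−1})) together with the standard basis vectors e_k for every index k at which a bound constraint is active (i.e. δ_k = m·δ̄ or δ_k = M·δ̄) is linearly independent. -/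

import Mathlib

/-! The unit vectors of the active constraints are independent, and the coordinate functional at
the inactive index `k₀` vanishes on all of them but not on the gradient, whose `k₀`-th entry is
`b k₀ * h' (δ k₀) < 0`. Hence the gradient lies outside their span. -/

open Set Submodule

section SingleOne

variable {ι R : Type*} [DecidableEq ι]

theorem span_single_one_subtype_le_ker_proj [Semiring R] {p : ι → Prop} {k₀ : ι} (hk₀ : ¬ p k₀) :
    span R (range fun k : Subtype p => (Pi.single k.1 1 : ι → R)) ≤
      LinearMap.ker (LinearMap.proj (R := R) (φ := fun _ : ι => R) k₀) := by
  rw [span_le]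
  rintro _ ⟨k, rfl⟩
  have hk : k.1 ≠ k₀ := fun he => hk₀ (he ▸ k.2)
  simp [hk]

theorem linearIndependent_option_of_single_one [DivisionRing R] {p : ι → Prop}
    {v : Option (Subtype p) → ι → R} (hsingle : ∀ k, v (some k) = Pi.single k.1 1)
    {k₀ : ι} (hk₀ : ¬ p k₀) (hnone : v none k₀ ≠ 0) :
    LinearIndependent R v := by
  have hsingle' : v ∘ some = fun k : Subtype p => (Pi.single k.1 1 : ι → R) := funext hsingle
  rw [linearIndependent_option, hsingle']
  exact ⟨(Pi.linearIndependent_single_one ι R).comp _ Subtype.val_injective,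
    fun hmem => hnone (span_single_one_subtype_le_ker_proj hk₀ hmem)⟩

end SingleOne

theorem licq_master_problem
    (N : ℕ) (δbar m M : ℝ)
    (b : Fin N → ℝ) (hb : ∀ k, 0 < b k)
    (h' : ℝ → ℝ)
    (h'_neg : ∀ σ ∈ Set.Ioo (m * δbar) (M * δbar), h' σ < 0)
    (δ : Fin N → ℝ)
    (k₀ : Fin N) (hk₀ : δ k₀ ∈ Set.Ioo (m * δbar) (M * δbar)) :
    LinearIndependent ℝ
      (fun i : Option {k : Fin N // δ k = m * δbar ∨ δ k = M * δbar} =>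
        match i with
        | none => (fun k => b k * h' (δ k) : Fin N → ℝ)
        | some k => (Pi.single k.1 1 : Fin N → ℝ)) := by
  refine linearIndependent_option_of_single_one (fun _ => rfl) (k₀ := k₀) ?_ ?_
  · rintro (hlow | hup)
    exacts [hk₀.1.ne' hlow, hk₀.2.ne hup]
  · exact mul_ne_zero (hb k₀).ne' (h'_neg _ hk₀).ne
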